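/- arXiv:1902.01848 — 5 statements merged into one kernel-verified Lean document; each statement's English description precedes it below -/
import Mathlib

section
/- Let S and P be symmetric matrices with ‖S − P‖₂ ≤ ε. Let U₋ be a matrix whose columns are orthonormal eigenvectors of S corresponding to eigenvalues with absolute value at most α, and V₊ a matrix whose columns are orthonormal eigenvectors of P corresponding to eigenvalues with absolute value at least β, where α < β. Then ‖U₋ᵀ V₊‖₂ ≤ ε / (β − α). -/
/-!
Write `M = Uᵀ V`. Since the columns of `U` and `V` are eigenvectors, `U` and `V` intertwine `S`
and `P` with the diagonal matrices `Dμ = diag μ` and `Dν = diag ν`, so the perturbation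
compressed to these eigenspaces is the Sylvester expression `Uᵀ (S - P) V = Dμ M - M Dν`.
Its norm is at most `ε` because `U` and `V` are isometries, while `‖Dμ‖ ≤ α` and
`‖Dν⁻¹‖ ≤ 1 / β` give `‖Dμ M‖ ≤ α ‖M‖` and `‖M Dν‖ ≥ β ‖M‖`; hence `(β - α) ‖M‖ ≤ ε`.
-/

open Matrix
open scoped Matrix.Norms.L2Operator

namespace Matrix

variable {𝕜 : Type*} [RCLike 𝕜] {l m n : Type*} [Fintype l] [Fintype m] [Fintype n]

lemma l2_opNorm_diagonal_le [DecidableEq n] {d : n → 𝕜} {c : ℝ} (hc : 0 ≤ c)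
    (hd : ∀ i, ‖d i‖ ≤ c) : ‖(diagonal d : Matrix n n 𝕜)‖ ≤ c := by
  rw [l2_opNorm_diagonal]
  exact (pi_norm_le_iff_of_nonneg hc).mpr hd

lemma l2_opNorm_le_one_of_conjTranspose_mul_self_eq_one [DecidableEq n] {U : Matrix m n 𝕜}
    (hU : Uᴴ * U = 1) : ‖U‖ ≤ 1 := by
  have h : ‖U‖ * ‖U‖ ≤ 1 := by
    rw [← l2_opNorm_conjTranspose_mul_self, hU, ← diagonal_one]
    exact l2_opNorm_diagonal_le zero_le_one fun _ => norm_one.le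
  nlinarith [norm_nonneg U]

lemma l2_opNorm_conjTranspose_mul_mul_le [DecidableEq m] [DecidableEq n] [DecidableEq l]
    {U : Matrix l m 𝕜} {V : Matrix l n 𝕜} (hU : Uᴴ * U = 1) (hV : Vᴴ * V = 1)
    (A : Matrix l l 𝕜) : ‖Uᴴ * A * V‖ ≤ ‖A‖ := by
  have hU' : ‖Uᴴ‖ ≤ 1 :=
    (l2_opNorm_conjTranspose U).trans_le (l2_opNorm_le_one_of_conjTranspose_mul_self_eq_one hU)
  have hV' : ‖V‖ ≤ 1 := l2_opNorm_le_one_of_conjTranspose_mul_self_eq_one hV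
  calc ‖Uᴴ * A * V‖ ≤ ‖Uᴴ‖ * ‖A‖ * ‖V‖ := by grw [l2_opNorm_mul, l2_opNorm_mul]
    _ ≤ 1 * ‖A‖ * 1 := by gcongr
    _ = ‖A‖ := by ring

lemma mul_le_l2_opNorm_mul_diagonal [DecidableEq n] {M : Matrix m n 𝕜} {ν : n → 𝕜} {β : ℝ}
    (hβ : 0 < β) (hν : ∀ j, β ≤ ‖ν j‖) : β * ‖M‖ ≤ ‖M * diagonal ν‖ := by
  have hinv : diagonal ν * diagonal (fun j => (ν j)⁻¹) = 1 := by
    rw [diagonal_mul_diagonal, ← diagonal_one]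
    congr with j
    exact mul_inv_cancel₀ (norm_pos_iff.mp (hβ.trans_le (hν j)))
  have hinv_norm : ‖(diagonal fun j => (ν j)⁻¹ : Matrix n n 𝕜)‖ ≤ β⁻¹ :=
    l2_opNorm_diagonal_le (inv_nonneg.mpr hβ.le) fun j => by
      rw [norm_inv]; exact inv_anti₀ hβ (hν j)
  calc β * ‖M‖ = β * ‖M * diagonal ν * diagonal fun j => (ν j)⁻¹‖ := by
        rw [Matrix.mul_assoc, hinv, Matrix.mul_one]
    _ ≤ β * (‖M * diagonal ν‖ * β⁻¹) := by grw [l2_opNorm_mul, hinv_norm]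
    _ = ‖M * diagonal ν‖ := by field_simp

lemma l2_opNorm_le_of_sylvester [DecidableEq m] [DecidableEq n] {A : Matrix m m 𝕜} {M : Matrix m n 𝕜} {B : Matrix n n 𝕜}
    {α β : ℝ} (hαβ : α < β) (hA : ‖A‖ ≤ α) (hB : β * ‖M‖ ≤ ‖M * B‖) :
    ‖M‖ ≤ ‖A * M - M * B‖ / (β - α) := by
  rw [le_div_iff₀ (sub_pos.mpr hαβ)]
  have hAM : ‖A * M‖ ≤ α * ‖M‖ := by grw [l2_opNorm_mul, hA]
  have htri : ‖M * B‖ - ‖A * M‖ ≤ ‖A * M - M * B‖ := by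
    rw [norm_sub_rev]; exact norm_sub_norm_le _ _
  linarith

lemma mul_eq_mul_diagonal_of_mulVec_col {R : Type*} [CommSemiring R] [DecidableEq n]
    {A : Matrix m m R} {U : Matrix m n R} {μ : n → R}
    (h : ∀ j, A *ᵥ (fun i => U i j) = μ j • fun i => U i j) : A * U = U * diagonal μ := by
  ext i j
  rw [mul_diagonal, mul_comm]
  exact congrFun (h j) i

end Matrix

theorem gap_free_wedin_general {n k₁ k₂ : ℕ} (S P : Matrix (Fin n) (Fin n) ℝ)
    (hS : S.IsSymm) (ε α β : ℝ) (hαβ : α < β)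
    (hdiff : ‖S - P‖ ≤ ε)
    (U : Matrix (Fin n) (Fin k₁) ℝ) (V : Matrix (Fin n) (Fin k₂) ℝ)
    (μ : Fin k₁ → ℝ) (ν : Fin k₂ → ℝ)
    (hUorth : Uᵀ * U = 1) (hVorth : Vᵀ * V = 1)
    (hUeig : ∀ j, S.mulVec (fun i => U i j) = μ j • (fun i => U i j))
    (hVeig : ∀ j, P.mulVec (fun i => V i j) = ν j • (fun i => V i j))
    (hμ : ∀ j, |μ j| ≤ α) (hν : ∀ j, β ≤ |ν j|) :
    ‖Uᵀ * V‖ ≤ ε / (β - α) := by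
  rcases isEmpty_or_nonempty (Fin k₁) with hempty | ⟨⟨j₀⟩⟩
  · have hM : Uᵀ * V = 0 := by ext i; exact isEmptyElim i
    rw [hM, norm_zero]
    exact div_nonneg ((norm_nonneg _).trans hdiff) (sub_pos.mpr hαβ).le
  have hα : 0 ≤ α := (abs_nonneg _).trans (hμ j₀)
  have hβ : 0 < β := hα.trans_lt hαβ
  have hUS : Uᵀ * S = diagonal μ * Uᵀ := by
    rw [← hS.eq, ← transpose_mul, mul_eq_mul_diagonal_of_mulVec_col hUeig, transpose_mul,
      diagonal_transpose]
  have hPV : P * V = V * diagonal ν := mul_eq_mul_diagonal_of_mulVec_col hVeig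
  have hsylvester : Uᵀ * (S - P) * V = diagonal μ * (Uᵀ * V) - Uᵀ * V * diagonal ν := by
    rw [Matrix.mul_sub, Matrix.sub_mul, hUS, Matrix.mul_assoc Uᵀ P, hPV, Matrix.mul_assoc,
      Matrix.mul_assoc]
  have hcompress : ‖Uᵀ * (S - P) * V‖ ≤ ε := by
    simp only [← conjTranspose_eq_transpose_of_trivial] at hUorth hVorth ⊢
    exact (l2_opNorm_conjTranspose_mul_mul_le hUorth hVorth _).trans hdiff
  calc ‖Uᵀ * V‖ ≤ ‖diagonal μ * (Uᵀ * V) - Uᵀ * V * diagonal ν‖ / (β - α) :=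
        l2_opNorm_le_of_sylvester hαβ (l2_opNorm_diagonal_le hα hμ)
          (mul_le_l2_opNorm_mul_diagonal hβ hν)
    _ ≤ ε / (β - α) := by
      rw [← hsylvester]; gcongr

/-- Gap-free Wedin-type theorem: if `S`, `P` are symmetric with `‖S − P‖₂ ≤ ε`,
`U` has orthonormal columns that are eigenvectors of `S` with eigenvalues of
absolute value at most `α`, and `V` has orthonormal columns that are eigenvectors
of `P` with eigenvalues of absolute value at least `β > α`, then
`‖Uᵀ V‖₂ ≤ ε / (β − α)`. -/
theorem gap_free_wedin {n k₁ k₂ : ℕ} (S P : Matrix (Fin n) (Fin n) ℝ)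
    (hS : S.IsSymm) (hP : P.IsSymm) (ε α β : ℝ) (hαβ : α < β)
    (hdiff : ‖S - P‖ ≤ ε)
    (U : Matrix (Fin n) (Fin k₁) ℝ) (V : Matrix (Fin n) (Fin k₂) ℝ)
    (μ : Fin k₁ → ℝ) (ν : Fin k₂ → ℝ)
    (hUorth : Uᵀ * U = 1) (hVorth : Vᵀ * V = 1)
    (hUeig : ∀ j, S.mulVec (fun i => U i j) = μ j • (fun i => U i j))
    (hVeig : ∀ j, P.mulVec (fun i => V i j) = ν j • (fun i => V i j))
    (hμ : ∀ j, |μ j| ≤ α) (hν : ∀ j, β ≤ |ν j|) :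
    ‖Uᵀ * V‖ ≤ ε / (β - α) :=
  gap_free_wedin_general S P hS ε α β hαβ hdiff U V μ ν hUorth hVorth hUeig hVeig hμ hν
end

section
/- Let S be an invertible n×n matrix with condition number κ = κ(S), and let N be a (1/(4κ))-net of the unit sphere S^{n−1}. Then for any matrix A, ‖S A‖₂ ≤ 2 · sup_{v ∈ N} ‖vᵀ A‖₂ / ‖vᵀ S^{-1}‖₂. -/
/-!
Approximating a unit vector `y` by a net point `v` and comparing with `‖vᵀA‖ ≤ M ‖vᵀS⁻¹‖`
gives `‖xᵀA‖ ≤ M ‖xᵀS⁻¹‖ + δ (M ‖S⁻¹‖ + ‖A‖) ‖x‖` for every `x`, where `M` is the supremum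
over the net and `δ = 1/(4κ)`. Substituting `xᵀ = wᵀS` yields
`‖SA‖ ≤ M + δκ M + δ ‖S‖ ‖A‖`, and `‖A‖ ≤ ‖S⁻¹‖ ‖SA‖` turns the last term into `δκ ‖SA‖`;
since `δκ ≤ 1/4`, this solves to `‖SA‖ ≤ 5M/3`.
-/

open Matrix
open scoped Matrix.Norms.L2Operator

section Net

variable {E F G : Type*} [NormedAddCommGroup E] [NormedSpace ℝ E] [NormedAddCommGroup F]
  [NormedSpace ℝ F] [NormedAddCommGroup G] [NormedSpace ℝ G]

theorem ContinuousLinearMap.norm_apply_le_of_net (T : E →L[ℝ] F) (U : E →L[ℝ] G) {N : Set E}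
    {δ M : ℝ} (hnet : ∀ x, ‖x‖ = 1 → ∃ v ∈ N, ‖x - v‖ ≤ δ) (hM0 : 0 ≤ M)
    (hM : ∀ v ∈ N, ‖T v‖ ≤ M * ‖U v‖) (x : E) :
    ‖T x‖ ≤ M * ‖U x‖ + δ * (M * ‖U‖ + ‖T‖) * ‖x‖ := by
  have hunit : ∀ y : E, ‖y‖ = 1 → ‖T y‖ ≤ M * ‖U y‖ + δ * (M * ‖U‖ + ‖T‖) := by
    intro y hy
    obtain ⟨v, hvN, hyv⟩ := hnet y hy
    have hT : ‖T y‖ ≤ ‖T v‖ + ‖T‖ * δ := by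
      calc ‖T y‖ = ‖T v + T (y - v)‖ := by rw [← map_add, add_sub_cancel]
        _ ≤ ‖T v‖ + ‖T‖ * ‖y - v‖ := (norm_add_le _ _).trans (by gcongr; exact T.le_opNorm _)
        _ ≤ ‖T v‖ + ‖T‖ * δ := by gcongr
    have hU : ‖U v‖ ≤ ‖U y‖ + ‖U‖ * δ := by
      calc ‖U v‖ = ‖U y - U (y - v)‖ := by rw [← map_sub, sub_sub_cancel]
        _ ≤ ‖U y‖ + ‖U‖ * ‖y - v‖ := (norm_sub_le _ _).trans (by gcongr; exact U.le_opNorm _)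
        _ ≤ ‖U y‖ + ‖U‖ * δ := by gcongr
    nlinarith [hM v hvN, mul_le_mul_of_nonneg_left hU hM0]
  rcases eq_or_ne x 0 with rfl | hx
  · simp
  have hx0 : ‖x‖ ≠ 0 := norm_ne_zero_iff.mpr hx
  have hTx : ‖T x‖ = ‖x‖ * ‖T (‖x‖⁻¹ • x)‖ := by
    rw [map_smul, norm_smul, norm_inv, norm_norm, mul_inv_cancel_left₀ hx0]
  have hUx : ‖U x‖ = ‖x‖ * ‖U (‖x‖⁻¹ • x)‖ := by
    rw [map_smul, norm_smul, norm_inv, norm_norm, mul_inv_cancel_left₀ hx0]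
  calc ‖T x‖ = ‖x‖ * ‖T (‖x‖⁻¹ • x)‖ := hTx
    _ ≤ ‖x‖ * (M * ‖U (‖x‖⁻¹ • x)‖ + δ * (M * ‖U‖ + ‖T‖)) := by
        gcongr; exact hunit _ (norm_smul_inv_norm hx)
    _ = M * ‖U x‖ + δ * (M * ‖U‖ + ‖T‖) * ‖x‖ := by rw [hUx]; ring

theorem ContinuousLinearMap.opNorm_comp_le_two_mul_of_net (L : E →L[ℝ] F) (P : E →L[ℝ] G)
    (Q : G →L[ℝ] E) (hPQ : ∀ x, P (Q x) = x) (hQP : ∀ x, Q (P x) = x) {N : Set E} {δ M : ℝ}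
    (hnet : ∀ x, ‖x‖ = 1 → ∃ v ∈ N, ‖x - v‖ ≤ δ) (hδ0 : 0 ≤ δ) (hδ : δ * (‖Q‖ * ‖P‖) ≤ 1 / 3)
    (hM0 : 0 ≤ M) (hM : ∀ v ∈ N, ‖L v‖ ≤ M * ‖P v‖) :
    ‖L.comp Q‖ ≤ 2 * M := by
  have hLQ : ‖L.comp Q‖ ≤ M + δ * ‖Q‖ * (M * ‖P‖ + ‖L‖) := by
    refine L.comp Q |>.opNorm_le_bound (by positivity) fun w => ?_
    calc ‖L (Q w)‖ ≤ M * ‖P (Q w)‖ + δ * (M * ‖P‖ + ‖L‖) * ‖Q w‖ :=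
          L.norm_apply_le_of_net P hnet hM0 hM (Q w)
      _ ≤ M * ‖w‖ + δ * (M * ‖P‖ + ‖L‖) * (‖Q‖ * ‖w‖) := by
          rw [hPQ]; gcongr; exact Q.le_opNorm w
      _ = (M + δ * ‖Q‖ * (M * ‖P‖ + ‖L‖)) * ‖w‖ := by ring
  have hL : ‖L‖ ≤ ‖L.comp Q‖ * ‖P‖ := by
    calc ‖L‖ = ‖(L.comp Q).comp P‖ := by congr 1; ext x; simp [hQP]
      _ ≤ ‖L.comp Q‖ * ‖P‖ := opNorm_comp_le _ _
  have hδL := mul_le_mul_of_nonneg_left hL (by positivity : 0 ≤ δ * ‖Q‖)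
  -- With `t = δ ‖Q‖ ‖P‖` this says `(1 - t) ‖L ∘ Q‖ ≤ (1 + t) M`, and `(1 + t) / (1 - t) ≤ 2`
  -- exactly when `t ≤ 1/3`.
  nlinarith [mul_nonneg (sub_nonneg.mpr hδ) (add_nonneg (norm_nonneg (L.comp Q)) hM0)]

end Net

namespace Matrix

variable {m n l : Type*} [Fintype m] [Fintype n] [Fintype l] [DecidableEq m]

noncomputable def vecMulCLM (A : Matrix m n ℝ) : EuclideanSpace ℝ m →L[ℝ] EuclideanSpace ℝ n :=
  (toEuclideanLin Aᵀ).toContinuousLinearMap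

theorem vecMulCLM_apply (A : Matrix m n ℝ) (v : EuclideanSpace ℝ m) :
    vecMulCLM A v = (EuclideanSpace.equiv n ℝ).symm (vecMul v A) := by
  rw [← mulVec_transpose]
  rfl

theorem norm_vecMulCLM [DecidableEq n] (A : Matrix m n ℝ) : ‖vecMulCLM A‖ = ‖A‖ := by
  rw [← l2_opNorm_conjTranspose, conjTranspose_eq_transpose_of_trivial, l2_opNorm_def]
  rfl

theorem vecMulCLM_mul [DecidableEq n] (A : Matrix m n ℝ) (B : Matrix n l ℝ) :
    vecMulCLM (A * B) = (vecMulCLM B).comp (vecMulCLM A) := by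
  ext1 v
  rw [ContinuousLinearMap.comp_apply, vecMulCLM_apply, vecMulCLM_apply, vecMulCLM_apply,
    ← vecMul_vecMul]
  rfl

theorem vecMulCLM_one : vecMulCLM (1 : Matrix m m ℝ) = ContinuousLinearMap.id ℝ _ := by
  ext1 v
  rw [vecMulCLM_apply, vecMul_one]
  rfl

theorem vecMulCLM_vecMulCLM_of_mul_eq_one {A : Matrix m n ℝ} {B : Matrix n m ℝ} [DecidableEq n]
    (h : A * B = 1) (v : EuclideanSpace ℝ m) : vecMulCLM B (vecMulCLM A v) = v := by
  rw [← ContinuousLinearMap.comp_apply, ← vecMulCLM_mul, h, vecMulCLM_one]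
  rfl

end Matrix

theorem Finset.le_ciSup₂_of_mem {α β : Type*} [ConditionallyCompleteLattice β] {f : α → β}
    {s : Finset α} {a : α} (ha : a ∈ s) : f a ≤ ⨆ x ∈ s, f x :=
  le_ciSup₂ (f := fun x (_ : x ∈ s) => f x)
    ((s.finite_toSet.image f).bddAbove.mono <|
      Set.iUnion_subset fun _ => Set.range_subset_iff.mpr fun hx => Set.mem_image_of_mem f hx) a ha

/-- Conditional ε-net bound (Lemma 4.1 of Simchowitz et al.): for invertible `S`
with condition number `κ = ‖S‖‖S⁻¹‖` and a `1/(4κ)`-net `N` of the unit sphere,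
for any matrix `A`, `‖S A‖₂ ≤ 2 sup_{v ∈ N} ‖vᵀ A‖ / ‖vᵀ S⁻¹‖`. -/
theorem conditional_net_bound {n m : ℕ} (S : Matrix (Fin n) (Fin n) ℝ)
    (hS : IsUnit S) (A : Matrix (Fin n) (Fin m) ℝ)
    (κ : ℝ) (hκ : κ = ‖S‖ * ‖S⁻¹‖)
    (N : Finset (EuclideanSpace ℝ (Fin n)))
    (hsphere : ∀ v ∈ N, ‖v‖ = 1)
    (hnet : ∀ x : EuclideanSpace ℝ (Fin n), ‖x‖ = 1 →
      ∃ v ∈ N, ‖x - v‖ ≤ 1 / (4 * κ)) :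
    ‖S * A‖ ≤ 2 * ⨆ v ∈ N,
      ‖(EuclideanSpace.equiv (Fin m) ℝ).symm (Matrix.vecMul v A)‖ /
        ‖(EuclideanSpace.equiv (Fin n) ℝ).symm (Matrix.vecMul v S⁻¹)‖ := by
  have hdet : IsUnit S.det := (isUnit_iff_isUnit_det S).mp hS
  set M := ⨆ v ∈ N, ‖(EuclideanSpace.equiv (Fin m) ℝ).symm (Matrix.vecMul v A)‖ /
    ‖(EuclideanSpace.equiv (Fin n) ℝ).symm (Matrix.vecMul v S⁻¹)‖
  have hM0 : 0 ≤ M := Real.iSup_nonneg fun _ => Real.iSup_nonneg fun _ => by positivity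
  have hM : ∀ v ∈ (N : Set _), ‖vecMulCLM A v‖ ≤ M * ‖vecMulCLM S⁻¹ v‖ := by
    intro v (hv : v ∈ N)
    have hden : 0 < ‖vecMulCLM S⁻¹ v‖ := by
      refine norm_pos_iff.mpr fun h => ?_
      have hv0 := vecMulCLM_vecMulCLM_of_mul_eq_one (nonsing_inv_mul S hdet) v
      rw [h, map_zero] at hv0
      simpa [← hv0] using hsphere v hv
    rw [← div_le_iff₀ hden, vecMulCLM_apply, vecMulCLM_apply]
    apply Finset.le_ciSup₂_of_mem hv
  have hκ0 : 0 ≤ κ := hκ ▸ by positivity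
  have hδ : 1 / (4 * κ) * (‖vecMulCLM S‖ * ‖vecMulCLM S⁻¹‖) ≤ 1 / 3 := by
    rw [norm_vecMulCLM, norm_vecMulCLM, ← hκ]
    rcases hκ0.eq_or_lt with h | h
    · simp [← h]
    · field_simp; norm_num
  have hbound := (vecMulCLM A).opNorm_comp_le_two_mul_of_net (vecMulCLM S⁻¹) (vecMulCLM S)
    (vecMulCLM_vecMulCLM_of_mul_eq_one (mul_nonsing_inv S hdet))
    (vecMulCLM_vecMulCLM_of_mul_eq_one (nonsing_inv_mul S hdet)) hnet (by positivity) hδ hM0 hM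
  rwa [← vecMulCLM_mul, norm_vecMulCLM] at hbound
end

section
/- Let H_{d,∞,∞} denote the Hankel matrix with (i,j) block C A^{d+i+j} B, and H̄_{0,d,d} the doubly infinite matrix obtained by zero-padding the finite d×d block Hankel matrix H_{0,d,d}. Then ‖H_{d,∞,∞}‖₂ ≤ ‖H_{0,∞,∞} − H̄_{0,d,d}‖₂ ≤ √2 · ‖H_{d,∞,∞}‖₂. -/
open Matrix
open scoped Matrix.Norms.L2Operator

/-- The `d × d` (block) truncation of a doubly infinite block matrix. -/
def truncMx {p m : ℕ} (H : (ℕ × Fin p) → (ℕ × Fin m) → ℝ) (d : ℕ) :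
    Matrix (Fin d × Fin p) (Fin d × Fin m) ℝ :=
  Matrix.of fun ia jb => H ((ia.1 : ℕ), ia.2) ((jb.1 : ℕ), jb.2)

/-- The operator (`ℓ² → ℓ²`) norm of a doubly infinite block matrix, as the
supremum of the `L2` operator norms of its finite truncations. -/
noncomputable def infOpNorm {p m : ℕ} (H : (ℕ × Fin p) → (ℕ × Fin m) → ℝ) : ℝ :=
  ⨆ d : ℕ, ‖truncMx H d‖

/-- The doubly infinite block Hankel matrix of `(C, A, B)` with offset `k`:
its `(i,j)` block is `C A^(k+i+j) B`. -/
def hankelMx {n p m : ℕ} (C : Matrix (Fin p) (Fin n) ℝ)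
    (A : Matrix (Fin n) (Fin n) ℝ) (B : Matrix (Fin n) (Fin m) ℝ) (k : ℕ) :
    (ℕ × Fin p) → (ℕ × Fin m) → ℝ :=
  fun ia jb => (C * A ^ (k + ia.1 + jb.1) * B) ia.2 jb.2

/-- The zero-padding of the finite `d × d` block Hankel matrix `H_{0,d,d}` to a
doubly infinite matrix. -/
def hankelPad {n p m : ℕ} (C : Matrix (Fin p) (Fin n) ℝ)
    (A : Matrix (Fin n) (Fin n) ℝ) (B : Matrix (Fin n) (Fin m) ℝ) (d : ℕ) :
    (ℕ × Fin p) → (ℕ × Fin m) → ℝ :=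
  fun ia jb => if ia.1 < d ∧ jb.1 < d then hankelMx C A B 0 ia jb else 0

/-!
All comparisons are made truncation by truncation. Reindexing a matrix along partial injections of
its row and column indices multiplies it by partial permutation matrices, which have `ℓ²` operator
norm at most `1`. Shifting the block rows by `d` embeds `H_{d,∞,∞}` into `H_{0,∞,∞} − H̄_{0,d,d}`,
which gives the lower bound. For the upper bound, split `H_{0,∞,∞} − H̄_{0,d,d}` into its block rows
of index `≥ d` and `< d`: the first part is `H_{d,∞,∞}` shifted down by `d` block rows, the second
(which vanishes in the block columns `< d`) is a row restriction of `H_{d,∞,∞}` shifted right by `d`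
block columns. Both have norm at most `‖H_{d,∞,∞}‖`, and because their row supports are disjoint
their Gram matrices add, so `‖H_{0,∞,∞} − H̄_{0,d,d}‖² ≤ 2 ‖H_{d,∞,∞}‖²`.
-/

namespace PEquiv

variable {l m n 𝕜 : Type*} [DecidableEq m] [DecidableEq n]

theorem conjTranspose_toMatrix {α : Type*} [Semiring α] [StarRing α] (f : m ≃. n) :
    (f.toMatrix : Matrix m n α)ᴴ = f.symm.toMatrix := by
  rw [toMatrix_symm]
  ext i j
  simp [apply_ite star]

theorem toMatrix_ofSet {α : Type*} [Zero α] [One α] (s : Set n) [DecidablePred (· ∈ s)] :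
    ((ofSet s).toMatrix : Matrix n n α) = diagonal fun i => if i ∈ s then 1 else 0 := by
  ext i j
  simp only [toMatrix_apply, diagonal_apply, Option.mem_def, ofSet_eq_some_iff]
  grind

variable [Fintype l] [Fintype m] [Fintype n] [RCLike 𝕜]

theorem l2_opNorm_toMatrix_le (f : m ≃. n) : ‖(f.toMatrix : Matrix m n 𝕜)‖ ≤ 1 := by
  -- `fᴴ f` is the diagonal projection onto the range of `f`
  have hproj : ‖(f.toMatrix : Matrix m n 𝕜)ᴴ * (f.toMatrix : Matrix m n 𝕜)‖ ≤ 1 := by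
    rw [conjTranspose_toMatrix, ← toMatrix_trans, symm_trans_self, toMatrix_ofSet,
      l2_opNorm_diagonal]
    refine pi_norm_le_iff_of_nonneg zero_le_one |>.2 fun i => ?_
    split_ifs <;> simp
  rw [l2_opNorm_conjTranspose_mul_self] at hproj
  nlinarith [norm_nonneg (f.toMatrix : Matrix m n 𝕜)]

theorem l2_opNorm_toMatrix_mul_le [DecidableEq l] (f : l ≃. m) (M : Matrix m n 𝕜) :
    ‖(f.toMatrix : Matrix l m 𝕜) * M‖ ≤ ‖M‖ :=
  (l2_opNorm_mul _ _).trans <| mul_le_of_le_one_left (norm_nonneg M) (l2_opNorm_toMatrix_le f)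

theorem l2_opNorm_mul_toMatrix_le (M : Matrix l m 𝕜) (f : m ≃. n) :
    ‖M * (f.toMatrix : Matrix m n 𝕜)‖ ≤ ‖M‖ :=
  (l2_opNorm_mul _ _).trans <| mul_le_of_le_one_right (norm_nonneg M) (l2_opNorm_toMatrix_le f)

end PEquiv

namespace Matrix

variable {m n m' n' 𝕜 : Type*} [Fintype m] [Fintype n] [Fintype m'] [Fintype n']
  [DecidableEq n] [RCLike 𝕜]

theorem l2_opNorm_le_of_pequiv [DecidableEq m] [DecidableEq m'] [DecidableEq n']
    {M : Matrix m' n' 𝕜} {N : Matrix m n 𝕜} (f : m ≃. m') (g : n ≃. n')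
    (hsome : ∀ i j i' j', f i = some i' → g j = some j' → N i j = M i' j')
    (hnone : ∀ i j, f i = none ∨ g j = none → N i j = 0) : ‖N‖ ≤ ‖M‖ := by
  have hN : N = (f.toMatrix : Matrix m m' 𝕜) * M * (g.symm.toMatrix : Matrix n' n 𝕜) := by
    ext i j
    rw [PEquiv.mul_toMatrix_apply, PEquiv.symm_symm]
    rcases hg : g j with _ | j'
    · exact hnone i j (Or.inr hg)
    · dsimp only
      rw [PEquiv.toMatrix_mul_apply]
      rcases hf : f i with _ | i'
      · exact hnone i j (Or.inl hf)
      · exact hsome i j i' j' hf hg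
  rw [hN]
  exact (PEquiv.l2_opNorm_mul_toMatrix_le _ _).trans (PEquiv.l2_opNorm_toMatrix_mul_le _ _)

theorem l2_opNorm_sq_le_of_row_split (M : Matrix m n 𝕜) (s : m → Prop) [DecidablePred s] :
    ‖M‖ ^ 2 ≤ ‖of fun i j => if s i then M i j else 0‖ ^ 2 +
      ‖of fun i j => if s i then 0 else M i j‖ ^ 2 := by
  set A : Matrix m n 𝕜 := of fun i j => if s i then M i j else 0
  set B : Matrix m n 𝕜 := of fun i j => if s i then 0 else M i j
  have hAB : Aᴴ * B = 0 := by
    ext j k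
    refine Finset.sum_eq_zero fun i _ => ?_
    by_cases hi : s i <;> simp [A, B, hi]
  have hBA : Bᴴ * A = 0 := by
    rw [← conjTranspose_conjTranspose A, ← conjTranspose_mul, hAB, conjTranspose_zero]
  have hsum : Mᴴ * M = Aᴴ * A + Bᴴ * B := by
    have hM : M = A + B := by
      ext i j
      by_cases hi : s i <;> simp [A, B, hi]
    rw [hM, conjTranspose_add, Matrix.add_mul, Matrix.mul_add, Matrix.mul_add, hAB, hBA,
      add_zero, zero_add]
  calc ‖M‖ ^ 2 = ‖Aᴴ * A + Bᴴ * B‖ := by rw [← hsum, l2_opNorm_conjTranspose_mul_self, sq]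
    _ ≤ ‖Aᴴ * A‖ + ‖Bᴴ * B‖ := norm_add_le _ _
    _ = ‖A‖ ^ 2 + ‖B‖ ^ 2 := by simp only [l2_opNorm_conjTranspose_mul_self, sq]

end Matrix

def blockShift (α : Type*) (d N N' : ℕ) : (Fin N × α) ≃. (Fin N' × α) where
  toFun x := if h : x.1 + d < N' then some (⟨x.1 + d, h⟩, x.2) else none
  invFun y := if h : d ≤ y.1 ∧ y.1 - d < N then some (⟨y.1 - d, h.2⟩, y.2) else none
  inv := by
    rintro ⟨⟨i, hi⟩, a⟩ ⟨⟨j, hj⟩, b⟩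
    split_ifs <;> simp only [Option.some.injEq, Prod.ext_iff, Fin.ext_iff] at * <;> grind

section blockShift

variable {α : Type*} {d N N' : ℕ}

theorem blockShift_eq_some_iff {x : Fin N × α} {y : Fin N' × α} :
    blockShift α d N N' x = some y ↔ (y.1 : ℕ) = x.1 + d ∧ y.2 = x.2 := by
  simp only [blockShift, PEquiv.coe_mk]
  split_ifs
  · simp only [Option.some.injEq, Prod.ext_iff, Fin.ext_iff]
    exact and_congr eq_comm eq_comm
  · simp only [false_iff]
    omega

theorem blockShift_eq_none_iff {x : Fin N × α} :
    blockShift α d N N' x = none ↔ N' ≤ x.1 + d := by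
  simp only [blockShift, PEquiv.coe_mk]
  split_ifs <;> simp only [true_iff, false_iff] <;> omega

theorem blockShift_symm_eq_some_iff {x : Fin N × α} {y : Fin N' × α} :
    (blockShift α d N N').symm y = some x ↔ (y.1 : ℕ) = x.1 + d ∧ y.2 = x.2 := by
  rw [PEquiv.eq_some_iff, blockShift_eq_some_iff]

theorem blockShift_symm_eq_none_iff {y : Fin N' × α} :
    (blockShift α d N N').symm y = none ↔ y.1 < d ∨ N + d ≤ y.1 := by
  simp only [blockShift, PEquiv.symm, PEquiv.coe_mk]
  split_ifs <;> simp only [true_iff, false_iff] <;> omega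

end blockShift

def hankelTruncError {n p m : ℕ} (C : Matrix (Fin p) (Fin n) ℝ)
    (A : Matrix (Fin n) (Fin n) ℝ) (B : Matrix (Fin n) (Fin m) ℝ) (d : ℕ) :
    (ℕ × Fin p) → (ℕ × Fin m) → ℝ :=
  fun ia jb => hankelMx C A B 0 ia jb - hankelPad C A B d ia jb

section hankel

variable {n p m : ℕ} (C : Matrix (Fin p) (Fin n) ℝ) (A : Matrix (Fin n) (Fin n) ℝ)
  (B : Matrix (Fin n) (Fin m) ℝ) (d N : ℕ)

theorem hankelMx_apply_congr {k k' i i' j j' : ℕ} (h : k + i + j = k' + i' + j') (a : Fin p)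
    (b : Fin m) : hankelMx C A B k (i, a) (j, b) = hankelMx C A B k' (i', a) (j', b) := by
  simp only [hankelMx, h]

theorem norm_truncMx_hankelMx_le :
    ‖truncMx (hankelMx C A B d) N‖ ≤ ‖truncMx (hankelTruncError C A B d) (N + d)‖ := by
  refine l2_opNorm_le_of_pequiv (blockShift (Fin p) d N (N + d)) (blockShift (Fin m) 0 N (N + d))
    (fun x y x' y' hx hy => ?_) (fun x y h => ?_)
  · rw [blockShift_eq_some_iff] at hx hy
    simp only [truncMx, of_apply, hankelTruncError, hankelPad, hx, hy]
    rw [if_neg (by omega), sub_zero]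
    exact hankelMx_apply_congr C A B (by omega) _ _
  · simp only [blockShift_eq_none_iff] at h
    exfalso
    have := x.1.isLt
    have := y.1.isLt
    omega

theorem norm_truncMx_hankelTruncError_rows_ge_le :
    ‖of fun x y => if d ≤ (x.1 : ℕ) then truncMx (hankelTruncError C A B d) N x y else 0‖ ≤
      ‖truncMx (hankelMx C A B d) N‖ := by
  refine l2_opNorm_le_of_pequiv (blockShift (Fin p) d N N).symm (PEquiv.refl _)
    (fun x y x' y' hx hy => ?_) (fun x y h => ?_)
  · rw [blockShift_symm_eq_some_iff] at hx
    cases hy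
    simp only [truncMx, of_apply, hankelTruncError, hankelPad, hx]
    rw [if_pos (by omega), if_neg (by omega), sub_zero]
    exact hankelMx_apply_congr C A B (by omega) _ _
  · simp only [blockShift_symm_eq_none_iff, PEquiv.refl_apply, reduceCtorEq, or_false] at h
    have := x.1.isLt
    simp only [of_apply]
    rw [if_neg (by omega)]

theorem norm_truncMx_hankelTruncError_rows_lt_le :
    ‖of fun x y => if d ≤ (x.1 : ℕ) then 0 else truncMx (hankelTruncError C A B d) N x y‖ ≤
      ‖truncMx (hankelMx C A B d) N‖ := by
  refine l2_opNorm_le_of_pequiv (PEquiv.ofSet {x | (x.1 : ℕ) < d}) (blockShift (Fin m) d N N).symm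
    (fun x y x' y' hx hy => ?_) (fun x y h => ?_)
  · rw [blockShift_symm_eq_some_iff] at hy
    rw [PEquiv.ofSet_eq_some_iff] at hx
    obtain ⟨rfl, hx⟩ := hx
    simp only [Set.mem_ofPred_eq] at hx
    simp only [truncMx, of_apply, hankelTruncError, hankelPad, hy]
    rw [if_neg (by omega), if_neg (by omega), sub_zero]
    exact hankelMx_apply_congr C A B (by omega) _ _
  · simp only [PEquiv.ofSet, Set.mem_ofPred_eq, PEquiv.coe_mk, ite_eq_right_iff, reduceCtorEq,
      imp_false, not_lt, blockShift_symm_eq_none_iff] at h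
    simp only [of_apply, truncMx, hankelTruncError, hankelPad]
    split_ifs
    · rfl
    · exact sub_self _
    · exfalso
      have := y.1.isLt
      omega

theorem norm_truncMx_hankelTruncError_le :
    ‖truncMx (hankelTruncError C A B d) N‖ ≤ √2 * ‖truncMx (hankelMx C A B d) N‖ := by
  have hsplit := l2_opNorm_sq_le_of_row_split (truncMx (hankelTruncError C A B d) N)
    (fun x => d ≤ (x.1 : ℕ))
  have hge :=
    pow_le_pow_left₀ (norm_nonneg _) (norm_truncMx_hankelTruncError_rows_ge_le C A B d N) 2
  have hlt :=
    pow_le_pow_left₀ (norm_nonneg _) (norm_truncMx_hankelTruncError_rows_lt_le C A B d N) 2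
  refine le_of_pow_le_pow_left₀ two_ne_zero (by positivity) ?_
  rw [mul_pow, Real.sq_sqrt zero_le_two]
  linarith

end hankel

theorem infOpNorm_le_mul_of_forall_le {p m p' m' : ℕ} {F : (ℕ × Fin p) → (ℕ × Fin m) → ℝ}
    {G : (ℕ × Fin p') → (ℕ × Fin m') → ℝ} {c c' : ℝ} (hc : 0 ≤ c) (hc' : 0 ≤ c')
    (hFG : ∀ N, ∃ N', ‖truncMx F N‖ ≤ c * ‖truncMx G N'‖)
    (hGF : ∀ N, ∃ N', ‖truncMx G N‖ ≤ c' * ‖truncMx F N'‖) :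
    infOpNorm F ≤ c * infOpNorm G := by
  by_cases hG : BddAbove (Set.range fun N => ‖truncMx G N‖)
  · refine ciSup_le fun N => ?_
    obtain ⟨N', hN'⟩ := hFG N
    exact hN'.trans (mul_le_mul_of_nonneg_left (le_ciSup hG N') hc)
  · -- both suprema are over unbounded sets, so both take the junk value `0`
    have hF : ¬BddAbove (Set.range fun N => ‖truncMx F N‖) := by
      rintro ⟨b, hb⟩
      refine hG ⟨c' * b, ?_⟩
      rintro _ ⟨N, rfl⟩
      obtain ⟨N', hN'⟩ := hGF N
      exact hN'.trans (mul_le_mul_of_nonneg_left (hb ⟨N', rfl⟩) hc')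
    rw [infOpNorm, infOpNorm, Real.iSup_of_not_bddAbove hF, Real.iSup_of_not_bddAbove hG,
      mul_zero]

theorem hankel_truncation_bounds_general {n p m : ℕ} (C : Matrix (Fin p) (Fin n) ℝ)
    (A : Matrix (Fin n) (Fin n) ℝ) (B : Matrix (Fin n) (Fin m) ℝ) (d : ℕ) :
    infOpNorm (hankelMx C A B d) ≤
        infOpNorm (fun ia jb => hankelMx C A B 0 ia jb - hankelPad C A B d ia jb) ∧
      infOpNorm (fun ia jb => hankelMx C A B 0 ia jb - hankelPad C A B d ia jb) ≤
        Real.sqrt 2 * infOpNorm (hankelMx C A B d) := by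
  have hHE (N : ℕ) : ‖truncMx (hankelMx C A B d) N‖ ≤
      1 * ‖truncMx (hankelTruncError C A B d) (N + d)‖ :=
    (norm_truncMx_hankelMx_le C A B d N).trans_eq (one_mul _).symm
  have hEH := norm_truncMx_hankelTruncError_le C A B d
  exact ⟨(infOpNorm_le_mul_of_forall_le zero_le_one (Real.sqrt_nonneg 2)
      (fun N => ⟨N + d, hHE N⟩) (fun N => ⟨N, hEH N⟩)).trans_eq (one_mul _),
    infOpNorm_le_mul_of_forall_le (Real.sqrt_nonneg 2) zero_le_one
      (fun N => ⟨N, hEH N⟩) (fun N => ⟨N + d, hHE N⟩)⟩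

/-- Hankel truncation error bound:
`‖H_{d,∞,∞}‖ ≤ ‖H_{0,∞,∞} − H̄_{0,d,d}‖ ≤ √2 ‖H_{d,∞,∞}‖` for a stable system. -/
theorem hankel_truncation_bounds {n p m : ℕ} (C : Matrix (Fin p) (Fin n) ℝ)
    (A : Matrix (Fin n) (Fin n) ℝ) (B : Matrix (Fin n) (Fin m) ℝ)
    (hstable : ∀ μ ∈ spectrum ℂ (A.map (algebraMap ℝ ℂ)), ‖μ‖ < 1) (d : ℕ) :
    infOpNorm (hankelMx C A B d) ≤
        infOpNorm (fun ia jb => hankelMx C A B 0 ia jb - hankelPad C A B d ia jb) ∧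
      infOpNorm (fun ia jb => hankelMx C A B 0 ia jb - hankelPad C A B d ia jb) ≤
        Real.sqrt 2 * infOpNorm (hankelMx C A B d) :=
  hankel_truncation_bounds_general C A B d
end

section
/- For d₁ ≥ d₂ ≥ 1, the zero-padded truncation errors of the system Hankel matrix satisfy ‖H_{0,∞,∞} − H̄_{0,d₁,d₁}‖₂ ≤ √2 · ‖H_{0,∞,∞} − H̄_{0,d₂,d₂}‖₂. -/
/-!
Write `E_k` for `H` with its leading `k × k` block zeroed. For `d₂ ≤ d₁`, let `P`, `P'` keep the
block rows of index `≥ d₁`, resp. `< d₁`, and `Q` the block columns of index `≥ d₁`. Then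
`E_{d₁} = P E_{d₂} + P' E_{d₂} Q`, and the two summands have orthogonal column spaces, so by the
C*-identity `‖E_{d₁}‖² ≤ ‖P E_{d₂}‖² + ‖P' E_{d₂} Q‖² ≤ 2 ‖E_{d₂}‖²`. This holds for every finite
truncation. It passes to the supremum defining `infOpNorm` because `E_{d₁}` and `E_{d₂}` differ in
finitely many entries, so their truncation norms are bounded together; this matters since a real
`⨆` of an unbounded family is `0`.
-/

open Matrix
open scoped Matrix.Norms.L2Operator

namespace Matrix

variable {𝕜 ι κ : Type*} [RCLike 𝕜] [Fintype ι] [Fintype κ] [DecidableEq κ]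

theorem l2_opNorm_add_sq_le_of_conjTranspose_mul_eq_zero {M N : Matrix ι κ 𝕜}
    (h : Mᴴ * N = 0) : ‖M + N‖ ^ 2 ≤ ‖M‖ ^ 2 + ‖N‖ ^ 2 := by
  have h' : Nᴴ * M = 0 := by
    simpa only [conjTranspose_mul, conjTranspose_conjTranspose, conjTranspose_zero] using
      congrArg conjTranspose h
  calc ‖M + N‖ ^ 2 = ‖(M + N)ᴴ * (M + N)‖ := by rw [sq, l2_opNorm_conjTranspose_mul_self]
    _ = ‖Mᴴ * M + Nᴴ * N‖ := by
      rw [conjTranspose_add, Matrix.add_mul, Matrix.mul_add, Matrix.mul_add, h, h', add_zero,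
        zero_add]
    _ ≤ ‖Mᴴ * M‖ + ‖Nᴴ * N‖ := norm_add_le _ _
    _ = ‖M‖ ^ 2 + ‖N‖ ^ 2 := by rw [l2_opNorm_conjTranspose_mul_self,
      l2_opNorm_conjTranspose_mul_self, sq, sq]

theorem l2_opNorm_diagonal_ite_le_one [DecidableEq ι] (p : ι → Prop) [DecidablePred p] :
    ‖(diagonal fun i => if p i then 1 else 0 : Matrix ι ι 𝕜)‖ ≤ 1 := by
  rw [l2_opNorm_diagonal]
  exact (pi_norm_le_iff_of_nonneg zero_le_one).2 fun i => by split_ifs <;> simp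

theorem l2_opNorm_of_ite_or_le_sqrt_two_mul [DecidableEq ι] (X : Matrix ι κ 𝕜)
    (p : ι → Prop) (q : κ → Prop) [DecidablePred p] [DecidablePred q] :
    ‖(of fun i j => if p i ∨ q j then X i j else 0 : Matrix ι κ 𝕜)‖ ≤ √2 * ‖X‖ := by
  set P : Matrix ι ι 𝕜 := diagonal fun i => if p i then 1 else 0
  set P' : Matrix ι ι 𝕜 := diagonal fun i => if ¬p i then 1 else 0
  set Q : Matrix κ κ 𝕜 := diagonal fun j => if q j then 1 else 0
  have hsplit : (of fun i j => if p i ∨ q j then X i j else 0) = P * X + P' * X * Q := by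
    ext i j
    by_cases hi : p i <;> by_cases hj : q j <;> simp [P, P', Q, hi, hj]
  have horth : (P * X)ᴴ * (P' * X * Q) = 0 := by
    have hPP' : Pᴴ * P' = 0 := by
      rw [diagonal_conjTranspose, diagonal_mul_diagonal, ← diagonal_zero]
      congr 1
      ext i
      by_cases hi : p i <;> simp [hi]
    rw [conjTranspose_mul, Matrix.mul_assoc, ← Matrix.mul_assoc Pᴴ, ← Matrix.mul_assoc Pᴴ, hPP',
      Matrix.zero_mul, Matrix.zero_mul, Matrix.mul_zero]
  have hPX : ‖P * X‖ ≤ ‖X‖ := (l2_opNorm_mul P X).trans <|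
    mul_le_of_le_one_left (norm_nonneg X) (l2_opNorm_diagonal_ite_le_one p)
  have hP'XQ : ‖P' * X * Q‖ ≤ ‖X‖ := by
    calc ‖P' * X * Q‖ ≤ ‖P'‖ * ‖X‖ * ‖Q‖ := by
          grw [l2_opNorm_mul, l2_opNorm_mul]
      _ ≤ 1 * ‖X‖ * 1 := by
          gcongr
          exacts [l2_opNorm_diagonal_ite_le_one _, l2_opNorm_diagonal_ite_le_one q]
      _ = ‖X‖ := by ring
  rw [hsplit, ← pow_le_pow_iff_left₀ (norm_nonneg _) (by positivity) two_ne_zero, mul_pow,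
    Real.sq_sqrt zero_le_two]
  calc ‖P * X + P' * X * Q‖ ^ 2 ≤ ‖P * X‖ ^ 2 + ‖P' * X * Q‖ ^ 2 :=
        l2_opNorm_add_sq_le_of_conjTranspose_mul_eq_zero horth
    _ ≤ ‖X‖ ^ 2 + ‖X‖ ^ 2 := by gcongr
    _ = 2 * ‖X‖ ^ 2 := by ring

theorem l2_opNorm_le_sqrt_sum_norm_sq (M : Matrix ι κ 𝕜) :
    ‖M‖ ≤ √(∑ i, ∑ j, ‖M i j‖ ^ 2) := by
  rw [l2_opNorm_def]
  refine ContinuousLinearMap.opNorm_le_bound _ (Real.sqrt_nonneg _) fun x => ?_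
  rw [← pow_le_pow_iff_left₀ (norm_nonneg _) (by positivity) two_ne_zero, mul_pow,
    Real.sq_sqrt (by positivity), EuclideanSpace.norm_sq_eq, EuclideanSpace.norm_sq_eq,
    Finset.sum_mul]
  refine Finset.sum_le_sum fun i _ => ?_
  calc ‖(M *ᵥ x.ofLp) i‖ ^ 2 ≤ (∑ j, ‖M i j‖ * ‖x.ofLp j‖) ^ 2 := by
        gcongr
        exact (norm_sum_le _ _).trans_eq (by simp only [norm_mul])
    _ ≤ (∑ j, ‖M i j‖ ^ 2) * ∑ j, ‖x.ofLp j‖ ^ 2 := Finset.sum_mul_sq_le_sq_mul_sq _ _ _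

end Matrix

theorem Real.iSup_le_mul_iSup {ι : Sort*} [Nonempty ι] {f g : ι → ℝ} {c : ℝ} (hc : 0 ≤ c)
    (h : ∀ i, f i ≤ c * g i) (hbdd : BddAbove (Set.range f) → BddAbove (Set.range g)) :
    ⨆ i, f i ≤ c * ⨆ i, g i := by
  by_cases hg : BddAbove (Set.range g)
  · exact ciSup_le fun i => (h i).trans (mul_le_mul_of_nonneg_left (le_ciSup hg i) hc)
  · rw [Real.iSup_of_not_bddAbove (mt hbdd hg), Real.iSup_of_not_bddAbove hg, mul_zero]

section Truncation

variable {p m : ℕ}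

theorem norm_truncMx_le_sqrt_tsum (H : (ℕ × Fin p) → (ℕ × Fin m) → ℝ)
    (hH : Summable fun x : (ℕ × Fin p) × (ℕ × Fin m) => H x.1 x.2 ^ 2) (d : ℕ) :
    ‖truncMx H d‖ ≤ √(∑' x : (ℕ × Fin p) × (ℕ × Fin m), H x.1 x.2 ^ 2) := by
  refine (Matrix.l2_opNorm_le_sqrt_sum_norm_sq _).trans (Real.sqrt_le_sqrt ?_)
  rw [← Fintype.sum_prod_type', ← tsum_fintype (L := .unconditional _)]
  have he : Function.Injective (Prod.map (Prod.map (Fin.val : Fin d → ℕ) id)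
      (Prod.map (Fin.val : Fin d → ℕ) id) : (Fin d × Fin p) × (Fin d × Fin m) → _) :=
    (Fin.val_injective.prodMap Function.injective_id).prodMap
      (Fin.val_injective.prodMap Function.injective_id)
  exact Summable.tsum_le_tsum_of_inj _ he (fun _ _ => sq_nonneg _)
    (fun _ => by simp [truncMx, Prod.map]) Summable.of_finite hH

theorem bddAbove_norm_truncMx_of_summable_sub {H H' : (ℕ × Fin p) → (ℕ × Fin m) → ℝ}
    (h : Summable fun x : (ℕ × Fin p) × (ℕ × Fin m) => (H' x.1 x.2 - H x.1 x.2) ^ 2)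
    (hH : BddAbove (Set.range fun d => ‖truncMx H d‖)) :
    BddAbove (Set.range fun d => ‖truncMx H' d‖) := by
  obtain ⟨b, hb⟩ := hH
  refine ⟨b + √(∑' x : (ℕ × Fin p) × (ℕ × Fin m), (H' x.1 x.2 - H x.1 x.2) ^ 2), ?_⟩
  rintro _ ⟨d, rfl⟩
  calc ‖truncMx H' d‖ ≤ ‖truncMx H d‖ + ‖truncMx H' d - truncMx H d‖ := norm_le_insert' _ _
    _ ≤ _ := add_le_add (hb ⟨d, rfl⟩)
      (norm_truncMx_le_sqrt_tsum (fun ia jb => H' ia jb - H ia jb) h d)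

def eraseCorner (H : (ℕ × Fin p) → (ℕ × Fin m) → ℝ) (k : ℕ) : (ℕ × Fin p) → (ℕ × Fin m) → ℝ :=
  fun ia jb => if ia.1 < k ∧ jb.1 < k then 0 else H ia jb

theorem summable_sq_eraseCorner_sub (H : (ℕ × Fin p) → (ℕ × Fin m) → ℝ) (k l : ℕ) :
    Summable fun x : (ℕ × Fin p) × (ℕ × Fin m) =>
      (eraseCorner H k x.1 x.2 - eraseCorner H l x.1 x.2) ^ 2 := by
  classical
  let box (d : ℕ) : Finset ((ℕ × Fin p) × (ℕ × Fin m)) :=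
    (Finset.range d ×ˢ Finset.univ) ×ˢ (Finset.range d ×ˢ Finset.univ)
  refine summable_of_ne_finset_zero (s := box k ∪ box l) fun x hx => ?_
  simp only [box, Finset.mem_union, Finset.mem_product, Finset.mem_range, Finset.mem_univ,
    and_true, not_or] at hx
  simp [eraseCorner, hx]

theorem norm_truncMx_eraseCorner_le (H : (ℕ × Fin p) → (ℕ × Fin m) → ℝ) {k l : ℕ} (hlk : l ≤ k)
    (d : ℕ) : ‖truncMx (eraseCorner H k) d‖ ≤ √2 * ‖truncMx (eraseCorner H l) d‖ := by
  convert Matrix.l2_opNorm_of_ite_or_le_sqrt_two_mul (truncMx (eraseCorner H l) d)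
    (fun ia => k ≤ (ia.1 : ℕ)) (fun jb => k ≤ (jb.1 : ℕ)) using 2
  ext ia jb
  simp only [truncMx, eraseCorner, Matrix.of_apply]
  split_ifs <;> first | rfl | omega

theorem infOpNorm_eraseCorner_le (H : (ℕ × Fin p) → (ℕ × Fin m) → ℝ) {k l : ℕ} (hlk : l ≤ k) :
    infOpNorm (eraseCorner H k) ≤ √2 * infOpNorm (eraseCorner H l) :=
  Real.iSup_le_mul_iSup (Real.sqrt_nonneg 2) (norm_truncMx_eraseCorner_le H hlk)
    (bddAbove_norm_truncMx_of_summable_sub (summable_sq_eraseCorner_sub H l k))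

end Truncation

theorem hankelMx_sub_hankelPad {n p m : ℕ} (C : Matrix (Fin p) (Fin n) ℝ)
    (A : Matrix (Fin n) (Fin n) ℝ) (B : Matrix (Fin n) (Fin m) ℝ) (d : ℕ) :
    (fun ia jb => hankelMx C A B 0 ia jb - hankelPad C A B d ia jb) =
      eraseCorner (hankelMx C A B 0) d := by
  ext ia jb
  simp only [hankelPad, eraseCorner]
  split_ifs <;> simp

theorem hankel_truncation_monotone_general {n p m : ℕ} (C : Matrix (Fin p) (Fin n) ℝ)
    (A : Matrix (Fin n) (Fin n) ℝ) (B : Matrix (Fin n) (Fin m) ℝ)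
    (d₁ d₂ : ℕ) (h21 : d₂ ≤ d₁) :
    infOpNorm (fun ia jb => hankelMx C A B 0 ia jb - hankelPad C A B d₁ ia jb) ≤
      Real.sqrt 2 *
        infOpNorm (fun ia jb => hankelMx C A B 0 ia jb - hankelPad C A B d₂ ia jb) := by
  rw [hankelMx_sub_hankelPad, hankelMx_sub_hankelPad]
  exact infOpNorm_eraseCorner_le _ h21

/-- Monotonicity (up to `√2`) of Hankel truncation errors: for `d₁ ≥ d₂ ≥ 1`,
`‖H_{0,∞,∞} − H̄_{0,d₁,d₁}‖ ≤ √2 ‖H_{0,∞,∞} − H̄_{0,d₂,d₂}‖`. -/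
theorem hankel_truncation_monotone {n p m : ℕ} (C : Matrix (Fin p) (Fin n) ℝ)
    (A : Matrix (Fin n) (Fin n) ℝ) (B : Matrix (Fin n) (Fin m) ℝ)
    (hstable : ∀ μ ∈ spectrum ℂ (A.map (algebraMap ℝ ℂ)), ‖μ‖ < 1)
    (d₁ d₂ : ℕ) (h21 : d₂ ≤ d₁) (h2 : 1 ≤ d₂) :
    infOpNorm (fun ia jb => hankelMx C A B 0 ia jb - hankelPad C A B d₁ ia jb) ≤
      Real.sqrt 2 *
        infOpNorm (fun ia jb => hankelMx C A B 0 ia jb - hankelPad C A B d₂ ia jb) :=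
  hankel_truncation_monotone_general C A B d₁ d₂ h21
end

section
/- Consider the order-n system M₁ with A₁ the n×n companion-type matrix having ones on the superdiagonal and −a in the (n,1) entry (all other entries zero), B₁ = e_n, C₁ = e_nᵀ, and the order-2 system M₂ with A₂ = [[0,0],[1,0]], B₂ = e₂ = (0,1)ᵀ, C₂ = B₂ᵀ. If n·a < 1, then the H∞-norm of the difference satisfies ‖M₁ − M₂‖_∞ ≤ 2 n a. -/
open Matrix
open scoped Matrix.Norms.L2Operator

/-!
Feeding the vector `(1, z, …, z^{n-1})` into `zI - A₁` gives `(z^n + a) e_n`, so the transfer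
function of `M₁` is `z^{n-1} / (z^n + a)`, while that of `M₂` is `1 / z`. Their difference is
`-a / (z (z^n + a))`, whose modulus on the unit circle is at most `a / (1 - a) ≤ 2a ≤ 2na`,
because `na < 1` with `n ≥ 2` forces `a ≤ 1/2`.
-/

section TransferFunction

variable {K ι : Type*} [Field K] [Fintype ι] [DecidableEq ι]

noncomputable def transferFn (A : Matrix ι ι K) (b c : ι → K) (z : K) : K :=
  c ⬝ᵥ ((z • 1 - A)⁻¹ *ᵥ b)

theorem transpose_replicateCol_mul_inv_mul_replicateCol (A : Matrix ι ι K) (b c : ι → K)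
    (z : K) :
    (replicateCol (Fin 1) c)ᵀ * (z • 1 - A)⁻¹ * replicateCol (Fin 1) b =
      of fun _ _ => transferFn A b c z := by
  rw [Matrix.mul_assoc, transpose_replicateCol, ← replicateCol_mulVec,
    replicateRow_mul_replicateCol, transferFn]

theorem transferFn_eq_of_mulVec_eq {A : Matrix ι ι K} {b c v : ι → K} {z d : K}
    (hdet : (z • 1 - A).det ≠ 0) (hv : (z • 1 - A) *ᵥ v = d • b) (hd : d ≠ 0) :
    transferFn A b c z = d⁻¹ * (c ⬝ᵥ v) := by
  have hb : b = d⁻¹ • (z • 1 - A) *ᵥ v := by rw [hv, inv_smul_smul₀ hd]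
  rw [transferFn, hb, mulVec_smul, mulVec_mulVec,
    nonsing_inv_mul _ (isUnit_iff_ne_zero.mpr hdet), one_mulVec, dotProduct_smul, smul_eq_mul]

end TransferFunction

section ShiftCompanion

variable {R K : Type*} {n : ℕ}

def shiftCompanion [Ring R] (n : ℕ) (a : R) : Matrix (Fin n) (Fin n) R :=
  of fun i j =>
    if (i : ℕ) + 1 = j then 1 else if (i : ℕ) = n - 1 ∧ (j : ℕ) = 0 then -a else 0

def lastUnitVec [Ring R] (n : ℕ) : Fin n → R :=
  fun i => if (i : ℕ) = n - 1 then 1 else 0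

theorem shiftCompanion_map {S : Type*} [Ring R] [Ring S] (f : R →+* S) (a : R) :
    (shiftCompanion n a).map f = shiftCompanion n (f a) := by
  ext i j
  simp only [shiftCompanion, map_apply, of_apply]
  split_ifs <;> simp

theorem lastUnitVec_dotProduct [Ring R] (hn : 0 < n) (v : Fin n → R) :
    lastUnitVec n ⬝ᵥ v = v ⟨n - 1, by omega⟩ := by
  rw [dotProduct, Finset.sum_eq_single ⟨n - 1, by omega⟩ (fun j _ hj => ?_) (by simp)]
  · simp [lastUnitVec]
  · rw [lastUnitVec, if_neg (fun h => hj (Fin.ext h)), zero_mul]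

theorem shiftCompanion_mulVec_apply [Ring R] (a : R) (w : Fin n → R) (i : Fin n) :
    (shiftCompanion n a *ᵥ w) i =
      if h : (i : ℕ) + 1 < n then w ⟨i + 1, h⟩ else -a * w ⟨0, i.pos⟩ := by
  rw [mulVec, dotProduct]
  split_ifs with h
  · rw [Finset.sum_eq_single ⟨i + 1, h⟩ (fun j _ hj => ?_) (by simp)]
    · simp [shiftCompanion]
    · have hj' : (i : ℕ) + 1 ≠ j := fun e => hj (Fin.ext e.symm)
      rw [shiftCompanion, of_apply, if_neg hj',
        if_neg (show ¬((i : ℕ) = n - 1 ∧ (j : ℕ) = 0) by omega), zero_mul]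
  · rw [Finset.sum_eq_single ⟨0, i.pos⟩ (fun j _ hj => ?_) (by simp)]
    · rw [shiftCompanion, of_apply, if_neg (show (i : ℕ) + 1 ≠ 0 by omega),
        if_pos (show (i : ℕ) = n - 1 ∧ (0 : ℕ) = 0 by omega)]
    · have hj' : (j : ℕ) ≠ 0 := fun e => hj (Fin.ext e)
      rw [shiftCompanion, of_apply, if_neg (show (i : ℕ) + 1 ≠ j by omega),
        if_neg (show ¬((i : ℕ) = n - 1 ∧ (j : ℕ) = 0) by omega), zero_mul]

theorem sub_shiftCompanion_mulVec_apply [CommRing R] (a z : R) (w : Fin n → R) (i : Fin n) :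
    ((z • 1 - shiftCompanion n a) *ᵥ w) i =
      z * w i - if h : (i : ℕ) + 1 < n then w ⟨i + 1, h⟩ else -a * w ⟨0, i.pos⟩ := by
  rw [sub_mulVec, smul_mulVec, one_mulVec, Pi.sub_apply, shiftCompanion_mulVec_apply,
    Pi.smul_apply, smul_eq_mul]

theorem sub_shiftCompanion_mulVec_pow [CommRing R] (a z : R) :
    (z • 1 - shiftCompanion n a) *ᵥ (fun i : Fin n => z ^ (i : ℕ)) =
      (z ^ n + a) • lastUnitVec n := by
  ext i
  rw [sub_shiftCompanion_mulVec_apply, Pi.smul_apply, lastUnitVec, smul_eq_mul]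
  split_ifs with h h' h'
  · omega
  · ring
  · rw [show z ^ n = z * z ^ (i : ℕ) by rw [← pow_succ']; congr 1; omega]
    simp
  · omega

theorem eq_zero_of_sub_shiftCompanion_mulVec_eq_zero [Field K] {a z : K} (hz : z ^ n + a ≠ 0)
    {w : Fin n → K} (hw : (z • 1 - shiftCompanion n a) *ᵥ w = 0) : w = 0 := by
  rcases Nat.eq_zero_or_pos n with rfl | hn
  · exact Subsingleton.elim _ _
  have hrow (i : ℕ) (h : i + 1 < n) : w ⟨i + 1, h⟩ = z * w ⟨i, by omega⟩ := by
    have := congrFun hw ⟨i, by omega⟩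
    rw [sub_shiftCompanion_mulVec_apply, dif_pos h, Pi.zero_apply] at this
    linear_combination -this
  have hpow (k : ℕ) (hk : k < n) : w ⟨k, hk⟩ = z ^ k * w ⟨0, hn⟩ := by
    induction k with
    | zero => simp
    | succ k ih => rw [hrow k hk, ih (by omega), pow_succ']; ring
  have hlast := congrFun hw ⟨n - 1, by omega⟩
  rw [sub_shiftCompanion_mulVec_apply, dif_neg (show ¬(n - 1 + 1 < n) by omega),
    hpow (n - 1) (by omega), Pi.zero_apply] at hlast
  have hw₀ : w ⟨0, hn⟩ = 0 := by
    refine (mul_eq_zero.mp ?_).resolve_left hz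
    linear_combination hlast - w ⟨0, hn⟩ * mul_pow_sub_one hn.ne' z
  funext i
  rw [Pi.zero_apply, hpow i i.2, hw₀, mul_zero]

theorem det_sub_shiftCompanion_ne_zero [Field K] {a z : K} (hz : z ^ n + a ≠ 0) :
    (z • 1 - shiftCompanion n a).det ≠ 0 := fun hdet => by
  obtain ⟨w, hw0, hw⟩ := exists_mulVec_eq_zero_iff.mpr hdet
  exact hw0 (eq_zero_of_sub_shiftCompanion_mulVec_eq_zero hz hw)

theorem transferFn_shiftCompanion [Field K] {a z : K} (hn : 0 < n) (hz : z ^ n + a ≠ 0) :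
    transferFn (shiftCompanion n a) (lastUnitVec n) (lastUnitVec n) z =
      z ^ (n - 1) / (z ^ n + a) := by
  rw [transferFn_eq_of_mulVec_eq (det_sub_shiftCompanion_ne_zero hz)
      (sub_shiftCompanion_mulVec_pow a z) hz, lastUnitVec_dotProduct hn, div_eq_inv_mul]

end ShiftCompanion

theorem transferFn_lowerShift {K : Type*} [Field K] {z : K} (hz : z ≠ 0) :
    transferFn (!![0, 0; 1, 0] : Matrix (Fin 2) (Fin 2) K) ![0, 1] ![0, 1] z = z⁻¹ := by
  have hM : z • 1 - !![0, 0; 1, 0] = (!![z, 0; -1, z] : Matrix (Fin 2) (Fin 2) K) := by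
    ext i j; fin_cases i <;> fin_cases j <;> simp
  have hv : (z • 1 - !![0, 0; 1, 0] : Matrix (Fin 2) (Fin 2) K) *ᵥ ![0, 1] = z • ![0, 1] := by
    rw [hM]; ext i; fin_cases i <;> simp
  have hdet : (z • 1 - !![0, 0; 1, 0] : Matrix (Fin 2) (Fin 2) K).det ≠ 0 := by
    rw [hM, det_fin_two_of]; simpa using hz
  rw [transferFn_eq_of_mulVec_eq hdet hv hz]
  simp

theorem norm_matrix_fin_one {𝕜 : Type*} [RCLike 𝕜] (X : Matrix (Fin 1) (Fin 1) 𝕜) :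
    ‖X‖ = ‖X 0 0‖ := by
  have hX : X = X 0 0 • 1 := by
    ext i j; fin_cases i; fin_cases j; simp
  conv_lhs => rw [hX]
  rw [norm_smul, norm_one, mul_one]

theorem one_sub_le_norm_pow_add {z : ℂ} (hz : ‖z‖ = 1) (n : ℕ) (a : ℝ) :
    1 - |a| ≤ ‖z ^ n + a‖ := by
  have := norm_sub_le (z ^ n + a) a
  rw [add_sub_cancel_right, norm_pow, hz, one_pow, Complex.norm_real, Real.norm_eq_abs] at this
  linarith

theorem pow_add_ofReal_ne_zero {z : ℂ} (hz : ‖z‖ = 1) (n : ℕ) {a : ℝ} (ha : |a| < 1) :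
    z ^ n + a ≠ 0 :=
  norm_pos_iff.mp ((sub_pos.mpr ha).trans_le (one_sub_le_norm_pow_add hz n a))

theorem norm_pow_div_sub_inv_le {z : ℂ} (hz : ‖z‖ = 1) {n : ℕ} (hn : 0 < n) {a : ℝ}
    (ha : 0 < a) (ha' : a ≤ 1 / 2) : ‖z ^ (n - 1) / (z ^ n + a) - z⁻¹‖ ≤ 2 * a := by
  have hd := one_sub_le_norm_pow_add hz n a
  rw [abs_of_pos ha] at hd
  have hd0 : z ^ n + a ≠ 0 := pow_add_ofReal_ne_zero hz n (by rw [abs_of_pos ha]; linarith)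
  have hz0 : z ≠ 0 := norm_ne_zero_iff.mp (by simp [hz])
  have key : z ^ (n - 1) / (z ^ n + a) - z⁻¹ = -a / (z * (z ^ n + a)) := by
    obtain ⟨m, rfl⟩ : ∃ m, n = m + 1 := ⟨n - 1, by omega⟩
    rw [Nat.add_sub_cancel]
    field_simp
    ring
  rw [key, norm_div, norm_neg, norm_mul, hz, one_mul, Complex.norm_real,
    Real.norm_of_nonneg ha.le, div_le_iff₀ (by linarith)]
  nlinarith

/-- Example: the order-`n` companion-type system `M₁` (superdiagonal ones,
`(n,1)` entry `−a`, `B₁ = e_n`, `C₁ = e_nᵀ`) is approximated by the order-2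
system `M₂` (`A₂ = [[0,0],[1,0]]`, `B₂ = e₂`, `C₂ = B₂ᵀ`): if `n a < 1`, then
`‖M₁ − M₂‖_∞ = sup_ω ‖G₁(e^{iω}) − G₂(e^{iω})‖ ≤ 2 n a`. -/
theorem low_order_approximation_example (n : ℕ) (a : ℝ)
    (hn : 20 < n) (ha : 0 < a) (hna : (n : ℝ) * a < 1)
    (A₁ : Matrix (Fin n) (Fin n) ℝ)
    (hA₁ : A₁ = Matrix.of fun (i j : Fin n) =>
      if (i : ℕ) + 1 = (j : ℕ) then (1 : ℝ)
      else if (i : ℕ) = n - 1 ∧ (j : ℕ) = 0 then -a else 0)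
    (B₁ : Matrix (Fin n) (Fin 1) ℝ)
    (hB₁ : B₁ = Matrix.of fun (i : Fin n) (_ : Fin 1) => if (i : ℕ) = n - 1 then (1 : ℝ) else 0)
    (A₂ : Matrix (Fin 2) (Fin 2) ℝ) (hA₂ : A₂ = !![0, 0; 1, 0])
    (B₂ : Matrix (Fin 2) (Fin 1) ℝ) (hB₂ : B₂ = !![0; 1]) :
    (⨆ ω : ℝ,
      ‖(B₁ᵀ.map (algebraMap ℝ ℂ)) *
          (Complex.exp (ω * Complex.I) • (1 : Matrix (Fin n) (Fin n) ℂ) -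
            A₁.map (algebraMap ℝ ℂ))⁻¹ * (B₁.map (algebraMap ℝ ℂ)) -
        (B₂ᵀ.map (algebraMap ℝ ℂ)) *
          (Complex.exp (ω * Complex.I) • (1 : Matrix (Fin 2) (Fin 2) ℂ) -
            A₂.map (algebraMap ℝ ℂ))⁻¹ * (B₂.map (algebraMap ℝ ℂ))‖) ≤
      2 * (n : ℝ) * a := by
  have hA₁' : A₁.map (algebraMap ℝ ℂ) = shiftCompanion n (a : ℂ) :=
    hA₁ ▸ shiftCompanion_map (algebraMap ℝ ℂ) a
  have hB₁' : B₁.map (algebraMap ℝ ℂ) = replicateCol (Fin 1) (lastUnitVec n) := by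
    subst hB₁; ext i j; simp [lastUnitVec, apply_ite]
  have hA₂' : A₂.map (algebraMap ℝ ℂ) = !![0, 0; 1, 0] := by
    subst hA₂; ext i j; fin_cases i <;> fin_cases j <;> simp
  have hB₂' : B₂.map (algebraMap ℝ ℂ) = replicateCol (Fin 1) ![0, 1] := by
    subst hB₂; ext i j; fin_cases i <;> simp
  have hn₂ : (2 : ℝ) ≤ n := by exact_mod_cast (by omega : 2 ≤ n)
  have ha' : a ≤ 1 / 2 := by nlinarith
  refine ciSup_le fun ω => ?_
  have hz : ‖Complex.exp (ω * Complex.I)‖ = 1 := Complex.norm_exp_ofReal_mul_I ω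
  have hza : Complex.exp (ω * Complex.I) ^ n + a ≠ 0 :=
    pow_add_ofReal_ne_zero hz n (by rw [abs_of_pos ha]; linarith)
  rw [transpose_map, transpose_map, hA₁', hB₁', hA₂', hB₂',
    transpose_replicateCol_mul_inv_mul_replicateCol,
    transpose_replicateCol_mul_inv_mul_replicateCol,
    transferFn_shiftCompanion (by omega) hza, transferFn_lowerShift (by simp), norm_matrix_fin_one]
  calc _ ≤ 2 * a := norm_pow_div_sub_inv_le hz (by omega) ha ha'
    _ ≤ 2 * n * a := by nlinarith
end
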